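/- arXiv:1108.2695 — 3 statements merged into one kernel-verified Lean document; each statement's English description precedes it below -/
import Mathlib

section
/- Let E be a complete Hausdorff locally convex real topological vector space and let M ⊆ E be a (von Neumann) bounded subset. Then the barycenter map is continuous on the set of compactly supported Radon probability measures on E whose support is contained in M, equipped with the weak-* topology: if a net μ_α of such measures converges weakly to μ (i.e., ∫ φ dμ_α → ∫ φ dμ for every bounded continuous real function φ on E), then the barycenters b(μ_α) converge to b(μ) in E, where b(μ) is the unique point of E satisfying l(b(μ)) = ∫ l dμ for every continuous linear functional l on E. -/
/-!
Fix a continuous seminorm `p`. By Hahn–Banach, `p (b_i - b) = ∫ l dμ_i - ∫ l dμ` for some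
continuous functional `l` with `|l| ≤ p`. All these functionals are equicontinuous and bounded on
the bounded set `M` carrying all the measures, so after truncation it suffices that weak
convergence is uniform on a bounded family equicontinuous at the points of the compact support
`K` of `μ`. For that, a finite partition of unity near `K` replaces every member of the family,
up to a small error, by a combination of finitely many fixed bump functions with bounded
coefficients, and the mass that `μ_i` puts off these bumps tends to zero.
-/

open MeasureTheory Filter

/-- `s` is the support of the measure `μ`: the smallest closed set whose complement
has `μ`-measure zero. -/
def IsMeasSupport {X : Type*} [TopologicalSpace X] [MeasurableSpace X]
    (μ : Measure X) (s : Set X) : Prop :=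
  IsClosed s ∧ μ sᶜ = 0 ∧ ∀ t : Set X, IsClosed t → μ tᶜ = 0 → s ⊆ t

open Topology BoundedContinuousFunction

theorem IsCompact.exists_finset_sum_eq_one_of_mem_nhds {X : Type*} [TopologicalSpace X]
    [CompletelyRegularSpace X] {K : Set X} (hK : IsCompact K) (V : X → Set X)
    (hV : ∀ x ∈ K, V x ∈ 𝓝 x) :
    ∃ (T : Finset X) (φ : X → X →ᵇ ℝ), (∀ x y, 0 ≤ φ x y) ∧
      (∀ x ∈ T, ∀ y, φ x y ≠ 0 → y ∈ V x) ∧ (∀ y, ∑ x ∈ T, φ x y ≤ 1) ∧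
      ∀ y ∈ K, ∑ x ∈ T, φ x y = 1 := by
  have bump : ∀ x ∈ K, ∃ g : C(X, unitInterval), g x = 0 ∧ ∀ y, g y ≠ 1 → y ∈ V x :=
    fun x hx => by
      obtain ⟨g, hg, hgx, hgV⟩ := CompletelyRegularSpace.completely_regular_isOpen x
        (interior (V x)) isOpen_interior (mem_interior_iff_mem_nhds.2 (hV x hx))
      exact ⟨⟨g, hg⟩, hgx, fun y hy => interior_subset (not_not.1 fun h => hy (hgV h))⟩
  choose! g hgx hgV using bump
  let ψ : X → X → ℝ := fun x y => 1 - g x y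
  obtain ⟨T, hTK, hT⟩ := hK.elim_nhds_subcover (fun x => {y | (1 : ℝ) / 2 < ψ x y}) fun x hx =>
    (isOpen_lt continuous_const (by fun_prop)).mem_nhds (by norm_num [ψ, hgx x hx])
  let S : X → ℝ := fun y => ∑ x ∈ T, ψ x y
  have hψ0 : ∀ x y, 0 ≤ ψ x y := fun x y => sub_nonneg.2 (g x y).2.2
  have hψ1 : ∀ x y, ψ x y ≤ 1 := fun x y => sub_le_self _ (g x y).2.1
  have hd : ∀ y, 0 < max (S y) (1 / 2) := fun y => lt_max_of_lt_right (by norm_num)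
  -- dividing by `max S (1/2)` normalises the bumps wherever `S > 1/2`, in particular on `K`
  refine ⟨T, fun x => .ofNormedAddCommGroup (fun y => ψ x y / max (S y) (1 / 2))
    (by fun_prop (disch := exact fun y => (hd y).ne')) 2 fun y => ?_, fun x y => ?_,
    fun x hxT y hy => ?_, fun y => ?_, fun y hy => ?_⟩
  · rw [Real.norm_of_nonneg (div_nonneg (hψ0 x y) (hd y).le), div_le_iff₀ (hd y)]
    linarith [hψ1 x y, le_max_right (S y) (1 / 2)]
  · exact div_nonneg (hψ0 x y) (hd y).le
  · exact hgV x (hTK x hxT) y fun h => hy (by simp [ψ, h])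
  · simp only [coe_ofNormedAddCommGroup, ← Finset.sum_div]
    exact div_le_one_of_le₀ (le_max_left _ _) (hd y).le
  · obtain ⟨x, hxT, hx⟩ := Set.mem_iUnion₂.1 (hT hy)
    have hS : 1 / 2 < S y := hx.trans_le (Finset.single_le_sum (fun z _ => hψ0 z y) hxT)
    simp only [coe_ofNormedAddCommGroup, ← Finset.sum_div]
    rw [max_eq_left hS.le]
    exact div_self (by linarith)

theorem abs_sub_sum_mul_le {ι : Type*} (s : Finset ι) {w c : ι → ℝ} {a C ε : ℝ} (hε : 0 ≤ ε)
    (ha : |a| ≤ C) (hw : ∀ i ∈ s, 0 ≤ w i) (hw1 : ∑ i ∈ s, w i ≤ 1)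
    (hc : ∀ i ∈ s, w i ≠ 0 → |a - c i| ≤ ε) :
    |a - ∑ i ∈ s, c i * w i| ≤ ε + C * (1 - ∑ i ∈ s, w i) := by
  have hsplit : a - ∑ i ∈ s, c i * w i = a * (1 - ∑ i ∈ s, w i) + ∑ i ∈ s, w i * (a - c i) := by
    rw [mul_sub, mul_one, Finset.mul_sum, sub_add, ← Finset.sum_sub_distrib]
    exact congr_arg (a - ·) (Finset.sum_congr rfl fun i _ => by ring)
  have hterm : ∀ i ∈ s, |w i * (a - c i)| ≤ w i * ε := fun i hi => by
    rw [abs_mul, abs_of_nonneg (hw i hi)]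
    rcases eq_or_ne (w i) 0 with h | h
    · simp [h]
    · exact mul_le_mul_of_nonneg_left (hc i hi h) (hw i hi)
  calc |a - ∑ i ∈ s, c i * w i|
      ≤ |a| * (1 - ∑ i ∈ s, w i) + ∑ i ∈ s, w i * ε := by
        rw [hsplit]
        refine (abs_add_le _ _).trans (add_le_add ?_ ?_)
        · rw [abs_mul, abs_of_nonneg (sub_nonneg.2 hw1)]
        · exact (Finset.abs_sum_le_sum_abs _ _).trans (Finset.sum_le_sum hterm)
    _ ≤ C * (1 - ∑ i ∈ s, w i) + 1 * ε := by
        rw [← Finset.sum_mul]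
        gcongr
    _ = ε + C * (1 - ∑ i ∈ s, w i) := by ring

theorem abs_integral_sub_sum_mul_integral_le {X ι : Type*} [TopologicalSpace X]
    [MeasurableSpace X] [OpensMeasurableSpace X] (ν : Measure X) [IsProbabilityMeasure ν]
    (s : Finset ι) (c : ι → ℝ) (φ : ι → X →ᵇ ℝ) (f : X →ᵇ ℝ) {ε C : ℝ}
    (h : ∀ y, |f y - ∑ i ∈ s, c i * φ i y| ≤ ε + C * (1 - ∑ i ∈ s, φ i y)) :
    |∫ y, f y ∂ν - ∑ i ∈ s, c i * ∫ y, φ i y ∂ν| ≤ ε + C * (1 - ∑ i ∈ s, ∫ y, φ i y ∂ν) := by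
  have hφ : ∀ i ∈ s, Integrable (φ i) ν := fun i _ => (φ i).integrable ν
  have hcφ : Integrable (fun y => ∑ i ∈ s, c i * φ i y) ν :=
    integrable_finsetSum _ fun i hi => (hφ i hi).const_mul (c i)
  have hrest : Integrable (fun y => C * (1 - ∑ i ∈ s, φ i y)) ν :=
    ((integrable_const 1).sub (integrable_finsetSum _ hφ)).const_mul C
  calc |∫ y, f y ∂ν - ∑ i ∈ s, c i * ∫ y, φ i y ∂ν|
      = ‖∫ y, (f y - ∑ i ∈ s, c i * φ i y) ∂ν‖ := by
        rw [integral_sub (f.integrable ν) hcφ, integral_finsetSum _ fun i hi =>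
          (hφ i hi).const_mul (c i)]
        simp only [integral_const_mul, Real.norm_eq_abs]
    _ ≤ ∫ y, (ε + C * (1 - ∑ i ∈ s, φ i y)) ∂ν :=
        norm_integral_le_of_norm_le ((integrable_const ε).add hrest) (.of_forall h)
    _ = ε + C * (1 - ∑ i ∈ s, ∫ y, φ i y ∂ν) := by
        rw [integral_add (integrable_const ε) hrest, integral_const_mul,
          integral_sub (integrable_const 1) (integrable_finsetSum _ hφ), integral_finsetSum _ hφ]
        simp

theorem abs_sum_mul_sub_sum_mul_le {ι : Type*} (s : Finset ι) {c a b : ι → ℝ} {C : ℝ}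
    (hc : ∀ i ∈ s, |c i| ≤ C) :
    |∑ i ∈ s, c i * a i - ∑ i ∈ s, c i * b i| ≤ C * ∑ i ∈ s, |a i - b i| := by
  rw [← Finset.sum_sub_distrib, Finset.mul_sum]
  refine (Finset.abs_sum_le_sum_abs _ _).trans (Finset.sum_le_sum fun i hi => ?_)
  rw [← mul_sub, abs_mul]
  exact mul_le_mul_of_nonneg_right (hc i hi) (abs_nonneg _)

theorem abs_integral_sub_integral_le_of_sum_eq_one {X : Type*} [TopologicalSpace X]
    [MeasurableSpace X] [OpensMeasurableSpace X] (ν μ : Measure X) [IsProbabilityMeasure ν]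
    [IsProbabilityMeasure μ] (T : Finset X) (φ : X → X →ᵇ ℝ) (g : X →ᵇ ℝ) {ε C : ℝ}
    (hε : 0 ≤ ε) (hgC : ∀ y, |g y| ≤ C) (hφ0 : ∀ x y, 0 ≤ φ x y) (hφ1 : ∀ y, ∑ x ∈ T, φ x y ≤ 1)
    (hosc : ∀ x ∈ T, ∀ y, φ x y ≠ 0 → |g y - g x| ≤ ε)
    (hmass : ∑ x ∈ T, ∫ y, φ x y ∂μ = 1) :
    |∫ y, g y ∂ν - ∫ y, g y ∂μ| ≤ 2 * ε + (C * (1 - ∑ x ∈ T, ∫ y, φ x y ∂ν) +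
      C * ∑ x ∈ T, |∫ y, φ x y ∂ν - ∫ y, φ x y ∂μ|) := by
  have approx : ∀ (ρ : Measure X) [IsProbabilityMeasure ρ],
      |∫ y, g y ∂ρ - ∑ x ∈ T, g x * ∫ y, φ x y ∂ρ| ≤
        ε + C * (1 - ∑ x ∈ T, ∫ y, φ x y ∂ρ) := fun ρ _ =>
    abs_integral_sub_sum_mul_integral_le ρ T _ φ g fun y =>
      abs_sub_sum_mul_le T hε (hgC y) (fun x _ => hφ0 x y) (hφ1 y) fun x hx => hosc x hx y
  have hν := approx ν
  have hμ := approx μ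
  rw [hmass, sub_self, mul_zero, add_zero, abs_sub_comm] at hμ
  have hmid := abs_sum_mul_sub_sum_mul_le T (a := fun x => ∫ y, φ x y ∂ν)
    (b := fun x => ∫ y, φ x y ∂μ) fun x _ => hgC x
  calc |∫ y, g y ∂ν - ∫ y, g y ∂μ|
      ≤ |∫ y, g y ∂ν - ∑ x ∈ T, g x * ∫ y, φ x y ∂ν| +
        |∑ x ∈ T, g x * ∫ y, φ x y ∂ν - ∑ x ∈ T, g x * ∫ y, φ x y ∂μ| +
        |∑ x ∈ T, g x * ∫ y, φ x y ∂μ - ∫ y, g y ∂μ| :=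
        (abs_sub_le _ _ _).trans (add_le_add_left (abs_sub_le _ _ _) _)
    _ ≤ 2 * ε + (C * (1 - ∑ x ∈ T, ∫ y, φ x y ∂ν) +
        C * ∑ x ∈ T, |∫ y, φ x y ∂ν - ∫ y, φ x y ∂μ|) := by linarith

theorem tendstoUniformly_integral_of_equicontinuousAt {X ι Λ : Type*} [TopologicalSpace X]
    [CompletelyRegularSpace X] [MeasurableSpace X] [OpensMeasurableSpace X] {F : Filter ι}
    {μs : ι → Measure X} {μ : Measure X} [∀ i, IsProbabilityMeasure (μs i)]
    [IsProbabilityMeasure μ] {K : Set X} (hK : IsCompact K) (hμK : ∀ᵐ x ∂μ, x ∈ K)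
    (hweak : ∀ φ : X →ᵇ ℝ, Tendsto (fun i => ∫ x, φ x ∂μs i) F (𝓝 (∫ x, φ x ∂μ)))
    (f : Λ → X →ᵇ ℝ) {C : ℝ} (hC : ∀ l, ‖f l‖ ≤ C)
    (hf : ∀ x ∈ K, EquicontinuousAt (fun l => ⇑(f l)) x) :
    TendstoUniformly (fun i l => ∫ x, f l x ∂μs i) (fun l => ∫ x, f l x ∂μ) F := by
  rw [Metric.tendstoUniformly_iff]
  intro ε hε
  obtain ⟨T, φ, hφ0, hφV, hφ1, hφK⟩ := hK.exists_finset_sum_eq_one_of_mem_nhds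
    (fun x => {y | ∀ l, dist (f l x) (f l y) < ε / 3})
    fun x hx => Metric.equicontinuousAt_iff_right.1 (hf x hx) _ (by positivity)
  have hmass : ∑ x ∈ T, ∫ y, φ x y ∂μ = 1 := by
    rw [← integral_finsetSum _ fun x _ => (φ x).integrable μ,
      integral_congr_ae (hμK.mono hφK), integral_const]
    simp
  have hR : Tendsto (fun i => C * (1 - ∑ x ∈ T, ∫ y, φ x y ∂μs i) +
      C * ∑ x ∈ T, |∫ y, φ x y ∂μs i - ∫ y, φ x y ∂μ|) F (𝓝 0) := by
    have h1 := ((tendsto_finsetSum T fun x _ => hweak (φ x)).const_sub 1).const_mul C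
    have h2 := (tendsto_finsetSum T fun x _ =>
      ((hweak (φ x)).sub_const (∫ y, φ x y ∂μ)).abs).const_mul C
    simpa [hmass] using h1.add h2
  filter_upwards [hR.eventually_lt_const (by positivity : 0 < ε / 3)] with i hi l
  have hosc : ∀ x ∈ T, ∀ y, φ x y ≠ 0 → |f l y - f l x| ≤ ε / 3 := fun x hx y hxy => by
    rw [abs_sub_comm, ← Real.dist_eq]
    exact (hφV x hx y hxy l).le
  have := abs_integral_sub_integral_le_of_sum_eq_one (μs i) μ T φ (f l) (by positivity)
    (fun y => ((f l).norm_coe_le_norm y).trans (hC l)) hφ0 hφ1 hosc hmass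
  rw [dist_comm, Real.dist_eq]
  linarith

theorem Seminorm.exists_strongDual_abs_le_eq {E : Type*} [AddCommGroup E] [Module ℝ E]
    [TopologicalSpace E] [PolynormableSpace ℝ E] {p : Seminorm ℝ E} (hp : Continuous p) (v : E) :
    ∃ l : StrongDual ℝ E, (∀ x, |l x| ≤ p x) ∧ l v = p v := by
  have H : ∀ c : ℝ, c • v = 0 → c • p v = 0 := fun c hc => by
    rcases smul_eq_zero.1 hc with rfl | rfl <;> simp
  let f := LinearPMap.mkSpanSingleton' (σ := RingHom.id ℝ) v (p v) H
  have hfp : ∀ x, f x ≤ p x := by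
    rintro ⟨x, hx⟩
    obtain ⟨c, rfl⟩ := Submodule.mem_span_singleton.1 (by simpa [f] using hx)
    rw [LinearPMap.mkSpanSingleton'_apply, smul_eq_mul, map_smul_eq_mul]
    exact mul_le_mul_of_nonneg_right (le_abs_self c) (apply_nonneg p v)
  obtain ⟨l, hlf, hlp⟩ :=
    Module.Dual.exists_continuous_extension_of_le_seminorm_real f.domain f.toFun hp hfp
  have hv : v ∈ f.domain := by simp [f]
  exact ⟨l, hlp, (hlf ⟨v, hv⟩).trans (LinearPMap.mkSpanSingleton'_apply_self _ _ _ _)⟩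

namespace BoundedContinuousFunction

variable {X : Type*} [TopologicalSpace X] {C : ℝ}

noncomputable def clamp (hC : 0 ≤ C) (g : C(X, ℝ)) : X →ᵇ ℝ :=
  .ofNormedAddCommGroup (fun y => Set.projIcc (-C) C (neg_le_self hC) (g y)) (by fun_prop) C
    fun y => by
      rw [Real.norm_eq_abs, abs_le]
      exact (Set.projIcc (-C) C _ (g y)).2

theorem norm_clamp_le (hC : 0 ≤ C) (g : C(X, ℝ)) : ‖clamp hC g‖ ≤ C :=
  norm_ofNormedAddCommGroup_le _ hC _

theorem clamp_apply_of_abs_le (hC : 0 ≤ C) (g : C(X, ℝ)) {y : X} (hy : |g y| ≤ C) :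
    clamp hC g y = g y := by
  show (Set.projIcc (-C) C (neg_le_self hC) (g y) : ℝ) = g y
  rw [Set.projIcc_of_mem _ (abs_le.1 hy)]

theorem dist_clamp_le (hC : 0 ≤ C) (g : C(X, ℝ)) (y z : X) :
    dist (clamp hC g y) (clamp hC g z) ≤ |g y - g z| :=
  Set.abs_projIcc_sub_projIcc (h := neg_le_self hC)

end BoundedContinuousFunction

theorem tendsto_seminorm_sub_barycenter {E ι : Type*} [AddCommGroup E] [Module ℝ E]
    [TopologicalSpace E] [IsTopologicalAddGroup E] [CompletelyRegularSpace E]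
    [PolynormableSpace ℝ E] [MeasurableSpace E] [OpensMeasurableSpace E] {p : Seminorm ℝ E}
    (hp : Continuous p) {M K : Set E} (hM : Bornology.IsVonNBounded ℝ M) (hK : IsCompact K)
    (hKM : K ⊆ M) {F : Filter ι} {μs : ι → Measure E} {μ : Measure E}
    [∀ i, IsProbabilityMeasure (μs i)] [IsProbabilityMeasure μ]
    (hμsM : ∀ i, ∀ᵐ x ∂μs i, x ∈ M) (hμK : ∀ᵐ x ∂μ, x ∈ K)
    (hweak : ∀ φ : E →ᵇ ℝ, Tendsto (fun i => ∫ x, φ x ∂μs i) F (𝓝 (∫ x, φ x ∂μ)))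
    {bs : ι → E} {b : E} (hbs : ∀ i, ∀ l : E →L[ℝ] ℝ, l (bs i) = ∫ x, l x ∂μs i)
    (hb : ∀ l : E →L[ℝ] ℝ, l b = ∫ x, l x ∂μ) :
    Tendsto (fun i => p (bs i - b)) F (𝓝 0) := by
  obtain ⟨C, hC, hpC⟩ :=
    (PolynormableSpace.withSeminorms ℝ E).isVonNBounded_iff_seminorm_bounded.1 hM ⟨p, hp⟩
  let Λ := {l : E →L[ℝ] ℝ // ∀ x, |l x| ≤ p x}
  let f : Λ → E →ᵇ ℝ := fun l => clamp hC.le l.1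
  have hf : ∀ ν : Measure E, (∀ᵐ x ∂ν, x ∈ M) → ∀ l : Λ, ∫ x, f l x ∂ν = ∫ x, l.1 x ∂ν :=
    fun ν hν l => integral_congr_ae (hν.mono fun x hx =>
      clamp_apply_of_abs_le _ _ ((l.2 x).trans (hpC x hx).le))
  have hequi : ∀ x, EquicontinuousAt (fun l => ⇑(f l)) x := fun x =>
    Metric.equicontinuousAt_of_continuity_modulus (fun y => p (x - y))
      ((hp.comp (continuous_sub_left x)).tendsto' x 0 (by simp)) _
      (.of_forall fun y l => (dist_clamp_le _ _ _ _).trans (by simpa using l.2 (x - y)))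
  have hunif := Metric.tendstoUniformly_iff.1 <| tendstoUniformly_integral_of_equicontinuousAt
    hK hμK hweak f (fun l => norm_clamp_le _ _) fun x _ => hequi x
  rw [Metric.tendsto_nhds]
  intro ε hε
  filter_upwards [hunif ε hε] with i hi
  obtain ⟨l, hlp, hlv⟩ := Seminorm.exists_strongDual_abs_le_eq hp (bs i - b)
  calc dist (p (bs i - b)) 0 = dist (l (bs i)) (l b) := by
        rw [Real.dist_eq, Real.dist_eq, sub_zero, ← map_sub, hlv, abs_of_nonneg (apply_nonneg _ _)]
    _ = dist (∫ x, f ⟨l, hlp⟩ x ∂μ) (∫ x, f ⟨l, hlp⟩ x ∂μs i) := by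
        rw [hf _ (hμsM i), hf _ (hμK.mono fun x hx => hKM hx), dist_comm, hbs, hb]
    _ < ε := hi ⟨l, hlp⟩

theorem IsMeasSupport.ae_mem {X : Type*} [TopologicalSpace X] [MeasurableSpace X]
    {μ : Measure X} {s : Set X} (h : IsMeasSupport μ s) : ∀ᵐ x ∂μ, x ∈ s :=
  mem_ae_iff.2 h.2.1

theorem barycenter_continuous_on_bounded_general
    {E : Type*} [AddCommGroup E] [Module ℝ E] [UniformSpace E] [IsUniformAddGroup E]
    [ContinuousSMul ℝ E] [LocallyConvexSpace ℝ E]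
    [MeasurableSpace E] [BorelSpace E]
    (M : Set E) (hM : Bornology.IsVonNBounded ℝ M)
    {ι : Type*} (F : Filter ι) (μs : ι → Measure E) (μ : Measure E)
    (hprob : ∀ i, IsProbabilityMeasure (μs i))
    (hsupp : ∀ i, ∃ K : Set E, IsCompact K ∧ IsMeasSupport (μs i) K ∧ K ⊆ M)
    (hμprob : IsProbabilityMeasure μ)
    (hμsupp : ∃ K : Set E, IsCompact K ∧ IsMeasSupport μ K ∧ K ⊆ M)
    (bs : ι → E) (b : E)
    (hbs : ∀ i, ∀ l : E →L[ℝ] ℝ, l (bs i) = ∫ x, l x ∂(μs i))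
    (hb : ∀ l : E →L[ℝ] ℝ, l b = ∫ x, l x ∂μ)
    (hweak : ∀ φ : BoundedContinuousFunction E ℝ,
      Tendsto (fun i => ∫ x, φ x ∂(μs i)) F (nhds (∫ x, φ x ∂μ))) :
    Tendsto bs F (nhds b) := by
  obtain ⟨K, hK, hμK, hKM⟩ := hμsupp
  have hμsM : ∀ i, ∀ᵐ x ∂μs i, x ∈ M := fun i => by
    obtain ⟨Ki, -, hμKi, hKiM⟩ := hsupp i
    exact hμKi.ae_mem.mono fun x hx => hKiM hx
  rw [(PolynormableSpace.withSeminorms ℝ E).tendsto_nhds]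
  rintro ⟨p, hp⟩ ε hε
  exact (tendsto_seminorm_sub_barycenter hp hM hK hKM hμsM hμK.ae_mem hweak hbs hb
    ).eventually_lt_const hε

/-- Let `E` be a complete Hausdorff locally convex real TVS and `M ⊆ E`
von Neumann bounded. The barycenter map is continuous, for the weak-* topology, on the
compactly supported Radon probability measures with support contained in `M`: if a net
of such measures converges weakly to such a measure, the corresponding barycenters
(the unique points integrating all continuous linear functionals correctly) converge. -/
theorem barycenter_continuous_on_bounded
    {E : Type*} [AddCommGroup E] [Module ℝ E] [UniformSpace E] [IsUniformAddGroup E]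
    [ContinuousSMul ℝ E] [LocallyConvexSpace ℝ E] [T2Space E] [CompleteSpace E]
    [MeasurableSpace E] [BorelSpace E]
    (M : Set E) (hM : Bornology.IsVonNBounded ℝ M)
    {ι : Type*} (F : Filter ι) (μs : ι → Measure E) (μ : Measure E)
    (hprob : ∀ i, IsProbabilityMeasure (μs i)) (hreg : ∀ i, (μs i).InnerRegular)
    (hsupp : ∀ i, ∃ K : Set E, IsCompact K ∧ IsMeasSupport (μs i) K ∧ K ⊆ M)
    (hμprob : IsProbabilityMeasure μ) (hμreg : μ.InnerRegular)
    (hμsupp : ∃ K : Set E, IsCompact K ∧ IsMeasSupport μ K ∧ K ⊆ M)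
    (bs : ι → E) (b : E)
    (hbs : ∀ i, ∀ l : E →L[ℝ] ℝ, l (bs i) = ∫ x, l x ∂(μs i))
    (hb : ∀ l : E →L[ℝ] ℝ, l b = ∫ x, l x ∂μ)
    (hweak : ∀ φ : BoundedContinuousFunction E ℝ,
      Tendsto (fun i => ∫ x, φ x ∂(μs i)) F (nhds (∫ x, φ x ∂μ))) :
    Tendsto bs F (nhds b) :=
  barycenter_continuous_on_bounded_general M hM F μs μ hprob hsupp hμprob hμsupp bs b hbs hb hweak
end

section
/- Let f : X → Y be a perfect continuous surjection between Tychonoff topological spaces admitting an averaging operator with compact supports, and let E be a real Banach space. Then there exists a linear operator T : C(X,E) → C(Y,E) such that: (i) T(h)(y) belongs to the closed convex hull of h(f⁻¹(y)) for all y ∈ Y and h ∈ C(X,E); (ii) T(φ ∘ f) = φ for every φ ∈ C(Y,E); (iii) T is continuous when both C(X,E) and C(Y,E) carry the topology of uniform convergence, and also when both carry the topology of uniform convergence on compact sets. (No k-space assumption on Y is needed.) -/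
open MeasureTheory
open scoped UniformConvergence

/-! The operator is `T h y = ∫ h d(g y)`. As `g y` is a probability measure living on the compact
fiber `f⁻¹(y)`, the value `T h y` lies in the closed convex hull of `h(f⁻¹(y))`, `T (φ ∘ f) = φ`,
and `‖T h y - T h' y‖ ≤ sup_{f⁻¹(y)} ‖h - h'‖`; since `f` is perfect, preimages of compact sets are
compact and both continuity statements follow. The real point is that `T h` is continuous: near a
fiber, `h` is uniformly approximated by finite sums `∑ φᵢ • vᵢ` with `φᵢ` bounded continuous real
functions (complete regularity of `X`), whose averages are continuous by weak continuity of `g`,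
and as `f` is closed, all fibers close to `f⁻¹(y)` stay inside the region of approximation. -/

open Set Filter
open scoped Topology BoundedContinuousFunction

section ConvexCombination

variable {E : Type*} [SeminormedAddCommGroup E] [NormedSpace ℝ E]

theorem dist_sum_smul_le_of_sum_eq_one {ι : Type*} {s : Finset ι} {w : ι → ℝ} {v : ι → E}
    {x : E} {ε : ℝ} (hw₀ : ∀ i ∈ s, 0 ≤ w i) (hw₁ : ∑ i ∈ s, w i = 1)
    (hv : ∀ i ∈ s, w i ≠ 0 → dist (v i) x ≤ ε) :
    dist (∑ i ∈ s, w i • v i) x ≤ ε := by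
  have hsub : ∑ i ∈ s, w i • v i - x = ∑ i ∈ s, w i • (v i - x) := by
    simp only [smul_sub, Finset.sum_sub_distrib, ← Finset.sum_smul, hw₁, one_smul]
  calc dist (∑ i ∈ s, w i • v i) x = ‖∑ i ∈ s, w i • (v i - x)‖ := by rw [dist_eq_norm, hsub]
    _ ≤ ∑ i ∈ s, w i * ε := by
      refine (norm_sum_le _ _).trans (Finset.sum_le_sum fun i hi => ?_)
      rw [norm_smul, Real.norm_of_nonneg (hw₀ i hi), ← dist_eq_norm]
      rcases eq_or_ne (w i) 0 with h0 | h0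
      · simp [h0]
      · exact mul_le_mul_of_nonneg_left (hv i hi h0) (hw₀ i hi)
    _ = ε := by rw [← Finset.sum_mul, hw₁, one_mul]

end ConvexCombination

section Approximation

variable {X E : Type*} [TopologicalSpace X] [CompletelyRegularSpace X]
  [SeminormedAddCommGroup E] [NormedSpace ℝ E]

theorem exists_bump_of_isOpen {x : X} {U : Set X} (hU : IsOpen U) (hx : x ∈ U) :
    ∃ G : C(X, ℝ), G x = 1 ∧ (∀ z, G z ∈ Icc (0 : ℝ) 1) ∧ ∀ z, G z ≠ 0 → z ∈ U := by
  obtain ⟨u, hu, hux, huU⟩ := CompletelyRegularSpace.completely_regular_isOpen x U hU hx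
  refine ⟨⟨fun z => 1 - u z, by fun_prop⟩, by simp [hux], fun z => ?_, fun z hz => ?_⟩
  · simp only [ContinuousMap.coe_mk, mem_Icc, sub_nonneg, sub_le_self_iff]
    exact ⟨(u z).2.2, (u z).2.1⟩
  · by_contra hzU
    simp [huU hzU] at hz

theorem exists_finset_sum_smul_approx_on_isCompact (h : C(X, E)) {K : Set X} (hK : IsCompact K)
    {ε : ℝ} (hε : 0 < ε) :
    ∃ (s : Finset X) (φ : X → X →ᵇ ℝ), ∀ z ∈ K, dist (∑ i ∈ s, φ i z • h i) (h z) ≤ ε := by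
  classical
  have hball : ∀ x, IsOpen {z | dist (h z) (h x) < ε} := fun x =>
    isOpen_lt (by fun_prop) continuous_const
  choose G hGx hG01 hGsupp using fun x =>
    exists_bump_of_isOpen (x := x) (hball x) (by simpa using hε)
  obtain ⟨s, hsK⟩ := hK.elim_finite_subcover (fun x => {z | 1 / 2 < G x z})
    (fun x => isOpen_lt continuous_const (G x).continuous)
    (fun x _ => mem_iUnion.2 ⟨x, by simp only [mem_ofPred_eq, hGx]; norm_num⟩)
  -- Normalizing by `max S (1/2)` instead of `S` keeps the weights continuous on all of `X`.
  let S : X → ℝ := fun z => ∑ i ∈ s, G i z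
  have hGS : ∀ i ∈ s, ∀ z, G i z ≤ S z := fun i hi z =>
    Finset.single_le_sum (fun j _ => (hG01 j z).1) hi
  have hD : ∀ z, 0 < max (S z) (1 / 2) := fun z => lt_max_of_lt_right one_half_pos
  let w : X → C(X, ℝ) := fun i =>
    ⟨fun z => G i z / max (S z) (1 / 2),
      (G i).continuous.div ((continuous_finsetSum _ fun j _ => (G j).continuous).max
        continuous_const) fun z => (hD z).ne'⟩
  have hw₀ : ∀ i z, 0 ≤ w i z := fun i z => div_nonneg (hG01 i z).1 (hD z).le
  have hw₂ : ∀ i z, ‖w i z‖ ≤ 2 := fun i z => by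
    rw [Real.norm_of_nonneg (hw₀ i z)]
    change G i z / max (S z) (1 / 2) ≤ 2
    rw [div_le_iff₀ (hD z)]
    linarith [(hG01 i z).2, le_max_right (S z) (1 / 2)]
  refine ⟨s, fun i => .ofNormedAddCommGroup (w i) (w i).continuous 2 (hw₂ i), fun z hz => ?_⟩
  obtain ⟨j, hj, hjz⟩ := mem_iUnion₂.1 (hsK hz)
  have hS : 1 / 2 ≤ S z := (le_of_lt hjz).trans (hGS j hj z)
  have hSz : max (S z) (1 / 2) = S z := max_eq_left hS
  refine dist_sum_smul_le_of_sum_eq_one (fun i _ => hw₀ i z) ?_ fun i _ hi => ?_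
  · simp only [BoundedContinuousFunction.coe_ofNormedAddCommGroup, w, ContinuousMap.coe_mk, hSz,
      ← Finset.sum_div]
    exact div_self (one_half_pos.trans_le hS).ne'
  · rw [dist_comm]
    refine (hGsupp i z fun hG => hi ?_).le
    simp [w, hG]

end Approximation

section ProbabilityIntegral

variable {X E : Type*} [MeasurableSpace X] [NormedAddCommGroup E] {μ : Measure X}

theorem Continuous.integrable_of_ae_mem_isCompact [TopologicalSpace X] [T2Space X]
    [OpensMeasurableSpace X] [IsFiniteMeasure μ] {h : X → E} (hh : Continuous h) {K : Set X}
    (hK : IsCompact K) (hμK : ∀ᵐ x ∂μ, x ∈ K) : Integrable h μ := by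
  rw [← Measure.restrict_eq_self_of_ae_mem hμK]
  exact hh.continuousOn.integrableOn_compact hK

variable [NormedSpace ℝ E] [IsProbabilityMeasure μ]

theorem dist_integral_le_of_ae_dist_le {h₁ h₂ : X → E}
    (hh₁ : Integrable h₁ μ) (hh₂ : Integrable h₂ μ) {c : ℝ}
    (hc : ∀ᵐ x ∂μ, dist (h₁ x) (h₂ x) ≤ c) : dist (∫ x, h₁ x ∂μ) (∫ x, h₂ x ∂μ) ≤ c := by
  rw [dist_eq_norm, ← integral_sub hh₁ hh₂]
  simpa using norm_integral_le_of_norm_le_const (hc.mono fun x hx => by rwa [← dist_eq_norm])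

theorem integral_comp_of_ae_eq_const [CompleteSpace E] {Y : Type*} {f : X → Y} {y : Y}
    (hf : ∀ᵐ x ∂μ, f x = y) (φ : Y → E) : ∫ x, φ (f x) ∂μ = φ y := by
  rw [integral_congr_ae (hf.mono fun x hx => congrArg φ hx), integral_const]
  simp

end ProbabilityIntegral

section FiberIntegral

variable {X Y E : Type*} [TopologicalSpace X] [T2Space X] [MeasurableSpace X]
  [OpensMeasurableSpace X] [NormedAddCommGroup E] [NormedSpace ℝ E]
  {f : X → Y} {μ : Y → ProbabilityMeasure X}

omit [NormedSpace ℝ E] in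
theorem integrable_of_ae_fiber (hfib : ∀ y, IsCompact (f ⁻¹' {y}))
    (hμf : ∀ y, ∀ᵐ x ∂(μ y : Measure X), f x = y) (h : C(X, E)) (y : Y) :
    Integrable h (μ y) :=
  h.continuous.integrable_of_ae_mem_isCompact (hfib y) (hμf y)

theorem dist_integral_le_of_dist_le_on_fiber (hfib : ∀ y, IsCompact (f ⁻¹' {y}))
    (hμf : ∀ y, ∀ᵐ x ∂(μ y : Measure X), f x = y) (h₁ h₂ : C(X, E)) {y : Y} {c : ℝ}
    (hc : ∀ x, f x = y → dist (h₁ x) (h₂ x) ≤ c) :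
    dist (∫ x, h₁ x ∂(μ y : Measure X)) (∫ x, h₂ x ∂(μ y : Measure X)) ≤ c :=
  dist_integral_le_of_ae_dist_le (integrable_of_ae_fiber hfib hμf h₁ y)
    (integrable_of_ae_fiber hfib hμf h₂ y) ((hμf y).mono hc)

theorem integral_mem_closure_convexHull_image_fiber [CompleteSpace E]
    (hfib : ∀ y, IsCompact (f ⁻¹' {y})) (hμf : ∀ y, ∀ᵐ x ∂(μ y : Measure X), f x = y)
    (h : C(X, E)) (y : Y) :
    ∫ x, h x ∂(μ y : Measure X) ∈ closure (convexHull ℝ (h '' (f ⁻¹' {y}))) :=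
  (convex_convexHull ℝ _).closure.integral_mem isClosed_closure
    ((hμf y).mono fun x hx => subset_closure (subset_convexHull ℝ _ ⟨x, hx, rfl⟩))
    (integrable_of_ae_fiber hfib hμf h y)

variable [TopologicalSpace Y]

omit [T2Space X] in
theorem continuous_integral_finset_sum_smul [CompleteSpace E] (hμ : Continuous μ)
    (s : Finset X) (φ : X → X →ᵇ ℝ) (v : X → E) :
    Continuous fun y => ∫ x, ∑ i ∈ s, φ i x • v i ∂(μ y : Measure X) := by
  have hint : ∀ y, ∀ i ∈ s, Integrable (fun x => φ i x • v i) (μ y) := fun y i _ =>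
    ((φ i).integrable _).smul_const _
  simp only [fun y => integral_finsetSum s (hint y), integral_smul_const]
  exact continuous_finsetSum _ fun i _ =>
    ((ProbabilityMeasure.continuous_integral_boundedContinuousFunction (φ i)).comp hμ).smul
      continuous_const

theorem continuous_integral_of_isClosedMap [CompletelyRegularSpace X] [CompleteSpace E]
    (hfc : IsClosedMap f) (hfib : ∀ y, IsCompact (f ⁻¹' {y})) (hμ : Continuous μ)
    (hμf : ∀ y, ∀ᵐ x ∂(μ y : Measure X), f x = y) (h : C(X, E)) :
    Continuous fun y => ∫ x, h x ∂(μ y : Measure X) := by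
  refine continuous_iff_continuousAt.2 fun y₀ =>
    continuousAt_of_locally_uniform_approx_of_continuousAt fun u hu => ?_
  obtain ⟨ε, hε, hεu⟩ := Metric.mem_uniformity_dist.1 hu
  obtain ⟨s, φ, hφ⟩ :=
    exists_finset_sum_smul_approx_on_isCompact h (hfib y₀) (by positivity : 0 < ε / 4)
  let ψ : C(X, E) := ⟨fun x => ∑ i ∈ s, φ i x • h i, by fun_prop⟩
  -- `ψ` stays close to `h` on a neighbourhood `V` of the fiber over `y₀`, and since `f` is closed,
  -- the fibers over all `y` near `y₀` lie in `V`.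
  let V : Set X := {x | dist (h x) (ψ x) < ε / 2}
  have hV : V ∈ 𝓝ˢ (f ⁻¹' {y₀}) :=
    (isOpen_lt (by fun_prop) continuous_const).mem_nhdsSet.2 fun x hx => by
      rw [mem_ofPred_eq, dist_comm]
      exact (hφ x hx).trans_lt (by linarith)
  obtain ⟨W, hW, hWV⟩ := mem_comap.1 (hfc.comap_nhds_le hV)
  refine ⟨W, hW, fun y => ∫ x, ψ x ∂(μ y : Measure X),
    (continuous_integral_finset_sum_smul hμ s φ h).continuousAt, fun y hy => hεu ?_⟩
  refine (dist_integral_le_of_dist_le_on_fiber hfib hμf h ψ fun x hx => ?_).trans_lt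
    (half_lt_self hε)
  exact (hWV (show f x ∈ W from hx ▸ hy)).le

end FiberIntegral

section OperatorContinuity

variable {X Y E : Type*} [TopologicalSpace X] [TopologicalSpace Y] [PseudoMetricSpace E]

theorem ContinuousMap.continuous_of_forall_isCompact_dist_le {T : C(X, E) → C(Y, E)}
    (hT : ∀ L : Set Y, IsCompact L → ∃ L' : Set X, IsCompact L' ∧
      ∀ h h' c, (∀ x ∈ L', dist (h x) (h' x) ≤ c) → ∀ y ∈ L, dist (T h y) (T h' y) ≤ c) :
    Continuous T := by
  refine continuous_iff_continuousAt.2 fun h₀ => ?_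
  refine ContinuousMap.tendsto_iff_forall_isCompact_tendstoUniformlyOn.2 fun L hL => ?_
  obtain ⟨L', hL', hTL⟩ := hT L hL
  have hL'unif := ContinuousMap.tendsto_iff_forall_isCompact_tendstoUniformlyOn.1
    (tendsto_id (x := 𝓝 h₀)) L' hL'
  rw [Metric.tendstoUniformlyOn_iff] at hL'unif ⊢
  intro ε hε
  filter_upwards [hL'unif (ε / 2) (half_pos hε)] with h hh y hy
  exact (hTL h₀ h (ε / 2) (fun x hx => (hh x hx).le) y hy).trans_lt (half_lt_self hε)

theorem lipschitzWith_one_uniformFun_of_dist_le {T : C(X, E) → C(Y, E)}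
    (hT : ∀ h h' c, (∀ x, dist (h x) (h' x) ≤ c) → ∀ y, dist (T h y) (T h' y) ≤ c) :
    LipschitzWith 1 (fun h : {u : X →ᵤ E // Continuous (UniformFun.toFun u)} =>
      (⟨UniformFun.ofFun ⇑(T ⟨UniformFun.toFun h.1, h.2⟩),
        (T ⟨UniformFun.toFun h.1, h.2⟩).continuous⟩ :
        {u : Y →ᵤ E // Continuous (UniformFun.toFun u)})) := by
  refine fun h h' => ?_
  rw [ENNReal.coe_one, one_mul, Subtype.edist_eq, Subtype.edist_eq, UniformFun.edist_le]
  intro y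
  rcases eq_or_ne (edist h.1 h'.1) ⊤ with htop | htop
  · exact htop ▸ le_top
  rw [← ENNReal.ofReal_toReal htop, edist_le_ofReal ENNReal.toReal_nonneg]
  refine hT _ _ _ (fun x => ?_) y
  rw [← edist_le_ofReal ENNReal.toReal_nonneg, ENNReal.ofReal_toReal htop]
  exact UniformFun.edist_eval_le

end OperatorContinuity

theorem averaging_operator_banach_general
    {X Y E : Type*} [TopologicalSpace X] [T35Space X] [TopologicalSpace Y]
    [MeasurableSpace X] [BorelSpace X]
    (f : X → Y) (hf : Continuous f)
    (hfclosed : IsClosedMap f) (hffib : ∀ y, IsCompact (f ⁻¹' {y}))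
    (g : Y → {μ : ProbabilityMeasure X //
        μ.toMeasure.InnerRegular ∧ ∃ K : Set X, IsCompact K ∧ IsMeasSupport μ.toMeasure K})
    (hg : Topology.IsEmbedding g)
    (hgsupp : ∀ (y : Y) (K : Set X), IsMeasSupport (g y).1.toMeasure K → K ⊆ f ⁻¹' {y})
    [NormedAddCommGroup E] [NormedSpace ℝ E] [CompleteSpace E] :
    ∃ T : C(X, E) → C(Y, E),
      (∀ h₁ h₂, T (h₁ + h₂) = T h₁ + T h₂) ∧
      (∀ (c : ℝ) h, T (c • h) = c • T h) ∧
      -- (i) values in closed convex hulls of fiber images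
      (∀ (h : C(X, E)) (y : Y), T h y ∈ closure (convexHull ℝ (⇑h '' (f ⁻¹' {y})))) ∧
      -- (ii) averaging property
      (∀ φ : C(Y, E), T (φ.comp ⟨f, hf⟩) = φ) ∧
      -- (iii) continuity for the topology of uniform convergence on compact sets
      Continuous T ∧
      -- (iii) continuity for the topology of uniform convergence
      Continuous (fun h : {u : X →ᵤ E // Continuous (UniformFun.toFun u)} =>
        (⟨UniformFun.ofFun ⇑(T ⟨UniformFun.toFun h.1, h.2⟩),
          (T ⟨UniformFun.toFun h.1, h.2⟩).continuous⟩ :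
          {u : Y →ᵤ E // Continuous (UniformFun.toFun u)})) := by
  let μ : Y → ProbabilityMeasure X := fun y => (g y).1
  have hμ : Continuous μ := continuous_subtype_val.comp hg.continuous
  have hμf : ∀ y, ∀ᵐ x ∂(μ y : Measure X), f x = y := fun y => by
    obtain ⟨K, -, hK⟩ := (g y).2.2
    filter_upwards [mem_ae_iff.2 hK.2.1] with x hx using hgsupp y K hK hx
  have hdist := dist_integral_le_of_dist_le_on_fiber (E := E) hffib hμf
  let T : C(X, E) → C(Y, E) := fun h => ⟨fun y => ∫ x, h x ∂(μ y : Measure X),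
    continuous_integral_of_isClosedMap hfclosed hffib hμ hμf h⟩
  refine ⟨T, fun h₁ h₂ => ?_, fun c h => ?_,
    integral_mem_closure_convexHull_image_fiber hffib hμf, fun φ => ?_, ?_,
    (lipschitzWith_one_uniformFun_of_dist_le (T := T) ?_).continuous⟩
  · ext y
    exact integral_add (integrable_of_ae_fiber hffib hμf h₁ y)
      (integrable_of_ae_fiber hffib hμf h₂ y)
  · ext y
    exact integral_smul c _
  · ext y
    exact integral_comp_of_ae_eq_const (hμf y) φ
  · refine ContinuousMap.continuous_of_forall_isCompact_dist_le fun L hL =>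
      ⟨f ⁻¹' L, (isProperMap_iff_isClosedMap_and_compact_fibers.2
        ⟨hf, hfclosed, hffib⟩).isCompact_preimage hL, fun h h' c hc y hy => ?_⟩
    exact hdist h h' fun x hx => hc x (show f x ∈ L from hx ▸ hy)
  · exact fun h h' c hc y => hdist h h' fun x _ => hc x

/-- Let `f : X → Y` be a perfect continuous surjection of Tychonoff spaces
admitting an averaging operator with compact supports, and let `E` be a real Banach
space (no k-space assumption on `Y`). Then there is a linear operator
`T : C(X,E) → C(Y,E)` with values in the closed convex hulls of the fiber images, which
is a right inverse to composition with `f`, and is continuous for the uniform topology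
and for the topology of uniform convergence on compact sets. -/
theorem averaging_operator_banach
    {X Y E : Type*} [TopologicalSpace X] [T35Space X] [TopologicalSpace Y] [T35Space Y]
    [MeasurableSpace X] [BorelSpace X]
    (f : X → Y) (hf : Continuous f) (hfsurj : Function.Surjective f)
    (hfclosed : IsClosedMap f) (hffib : ∀ y, IsCompact (f ⁻¹' {y}))
    (g : Y → {μ : ProbabilityMeasure X //
        μ.toMeasure.InnerRegular ∧ ∃ K : Set X, IsCompact K ∧ IsMeasSupport μ.toMeasure K})
    (hg : Topology.IsEmbedding g)
    (hgsupp : ∀ (y : Y) (K : Set X), IsMeasSupport (g y).1.toMeasure K → K ⊆ f ⁻¹' {y})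
    [NormedAddCommGroup E] [NormedSpace ℝ E] [CompleteSpace E] :
    ∃ T : C(X, E) → C(Y, E),
      (∀ h₁ h₂, T (h₁ + h₂) = T h₁ + T h₂) ∧
      (∀ (c : ℝ) h, T (c • h) = c • T h) ∧
      -- (i) values in closed convex hulls of fiber images
      (∀ (h : C(X, E)) (y : Y), T h y ∈ closure (convexHull ℝ (⇑h '' (f ⁻¹' {y})))) ∧
      -- (ii) averaging property
      (∀ φ : C(Y, E), T (φ.comp ⟨f, hf⟩) = φ) ∧
      -- (iii) continuity for the topology of uniform convergence on compact sets
      Continuous T ∧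
      -- (iii) continuity for the topology of uniform convergence
      Continuous (fun h : {u : X →ᵤ E // Continuous (UniformFun.toFun u)} =>
        (⟨UniformFun.ofFun ⇑(T ⟨UniformFun.toFun h.1, h.2⟩),
          (T ⟨UniformFun.toFun h.1, h.2⟩).continuous⟩ :
          {u : Y →ᵤ E // Continuous (UniformFun.toFun u)})) :=
  averaging_operator_banach_general f hf hfclosed hffib g hg hgsupp
end

section
/- Let X be a metric space, A ⊆ X a closed subset, and E a complete Hausdorff locally convex real topological vector space. Then there exists a linear extension operator S : C(A,E) → C(X,E), i.e., a linear operator such that S(h)(x) = h(x) for every h ∈ C(A,E) and every x ∈ A. -/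
/-!
Dugundji's construction. Choose a locally finite partition of unity `(f i)` on `X \ A`
subordinate to the balls `B(c, d(c, A) / 3)`, `c ∉ A`, and for each `c` a point `a c ∈ A` with
`d(c, a c) < 2 d(c, A)`. Extend `h` off `A` by the convex combinations `∑ᶠ i, f i x • h (a i)`.
This is linear in `h`, continuous off `A`, and continuous at points `x₀ ∈ A` because every anchor
`a i` with `f i x ≠ 0` lies within `5 d(x, x₀)` of `x₀`, so near `x₀` the extension takes values in
convex hulls of values of `h` close to `h x₀`; local convexity of `E` does the rest.
-/

open Metric Set Filter Topology

namespace PartitionOfUnity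

variable {ι X E : Type*} [TopologicalSpace X] {A : Set X}
  [AddCommGroup E] [Module ℝ E]
  (f : PartitionOfUnity ι ↥Aᶜ univ) (a : ι → A)

open Classical in
noncomputable def dugundjiExtend (h : A → E) (x : X) : E :=
  if hx : x ∈ A then h ⟨x, hx⟩ else ∑ᶠ i, f i ⟨x, hx⟩ • h (a i)

def IsDugundjiAnchor : Prop :=
  ∀ x₀ ∈ A, ∀ U ∈ 𝓝 x₀, ∀ᶠ x in 𝓝 x₀, ∀ (hx : x ∉ A) i, f i ⟨x, hx⟩ ≠ 0 → (a i : X) ∈ U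

variable {f a}

theorem dugundjiExtend_of_mem (h : A → E) {x : X} (hx : x ∈ A) :
    f.dugundjiExtend a h x = h ⟨x, hx⟩ :=
  dif_pos hx

theorem dugundjiExtend_of_notMem (h : A → E) {x : X} (hx : x ∉ A) :
    f.dugundjiExtend a h x = ∑ᶠ i, f i ⟨x, hx⟩ • h (a i) :=
  dif_neg hx

theorem dugundjiExtend_of_notMem_eq_sum (h : A → E) {x : X} (hx : x ∉ A) :
    f.dugundjiExtend a h x = ∑ i ∈ f.finsupport ⟨x, hx⟩, f i ⟨x, hx⟩ • h (a i) :=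
  (dugundjiExtend_of_notMem h hx).trans
    (f.sum_finsupport_smul_eq_finsum (fun i _ => h (a i))).symm

theorem dugundjiExtend_add (h₁ h₂ : A → E) :
    f.dugundjiExtend a (h₁ + h₂) = f.dugundjiExtend a h₁ + f.dugundjiExtend a h₂ := by
  ext x
  by_cases hx : x ∈ A
  · simp only [dugundjiExtend_of_mem _ hx, Pi.add_apply]
  · simp only [dugundjiExtend_of_notMem_eq_sum _ hx, Pi.add_apply, smul_add,
      Finset.sum_add_distrib]

theorem dugundjiExtend_smul (c : ℝ) (h : A → E) :
    f.dugundjiExtend a (c • h) = c • f.dugundjiExtend a h := by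
  ext x
  by_cases hx : x ∈ A
  · simp only [dugundjiExtend_of_mem _ hx, Pi.smul_apply]
  · simp only [dugundjiExtend_of_notMem_eq_sum _ hx, Pi.smul_apply, Finset.smul_sum,
      smul_comm c]

variable [TopologicalSpace E]

theorem continuousOn_dugundjiExtend_compl [ContinuousAdd E] [ContinuousSMul ℝ E] (h : A → E) :
    ContinuousOn (f.dugundjiExtend a h) Aᶜ := by
  rw [continuousOn_iff_continuous_domRestrict]
  have hrestrict : Aᶜ.domRestrict (f.dugundjiExtend a h) = fun x : ↥Aᶜ => ∑ᶠ i, f i x • h (a i) :=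
    funext fun x => dugundjiExtend_of_notMem h x.2
  rw [hrestrict]
  exact f.continuous_finsum_smul fun _ _ _ => continuousAt_const

theorem continuousAt_dugundjiExtend_of_mem [LocallyConvexSpace ℝ E] (ha : f.IsDugundjiAnchor a)
    (h : C(A, E)) {x₀ : X} (hx₀ : x₀ ∈ A) : ContinuousAt (f.dugundjiExtend a h) x₀ := by
  rw [ContinuousAt, dugundjiExtend_of_mem h hx₀]
  refine (LocallyConvexSpace.convex_basis (𝕜 := ℝ) (h ⟨x₀, hx₀⟩)).tendsto_right_iff.2 ?_
  rintro W ⟨hW, hWc⟩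
  obtain ⟨U, hU, hUW⟩ := (mem_nhds_subtype A _ _).1 (h.continuousAt _ hW)
  filter_upwards [ha x₀ hx₀ U hU, hU] with x hanchor hxU
  by_cases hx : x ∈ A
  · rw [dugundjiExtend_of_mem h hx]
    exact hUW hxU
  · rw [dugundjiExtend_of_notMem h hx]
    exact f.finsum_smul_mem_convex (g := fun i _ => h (a i)) (mem_univ _)
      (fun i hi => hUW (hanchor hx i hi)) hWc

theorem continuous_dugundjiExtend [ContinuousAdd E] [ContinuousSMul ℝ E] [LocallyConvexSpace ℝ E]
    (hA : IsClosed A) (ha : f.IsDugundjiAnchor a) (h : C(A, E)) :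
    Continuous (f.dugundjiExtend a h) := by
  refine continuous_iff_continuousAt.2 fun x => ?_
  by_cases hx : x ∈ A
  · exact continuousAt_dugundjiExtend_of_mem ha h hx
  · exact (continuousOn_dugundjiExtend_compl h).continuousAt (hA.isOpen_compl.mem_nhds hx)

variable (f a) in
noncomputable def dugundjiExtendₗ [ContinuousAdd E] [ContinuousSMul ℝ E] [LocallyConvexSpace ℝ E]
    (hA : IsClosed A) (ha : f.IsDugundjiAnchor a) : C(A, E) →ₗ[ℝ] C(X, E) where
  toFun h := ⟨f.dugundjiExtend a h, continuous_dugundjiExtend hA ha h⟩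
  map_add' h₁ h₂ := ContinuousMap.ext <| congrFun (dugundjiExtend_add h₁ h₂)
  map_smul' c h := ContinuousMap.ext <| congrFun (dugundjiExtend_smul c h)

end PartitionOfUnity

section Metric

variable {X : Type*} [MetricSpace X] {A : Set X}

theorem dist_lt_five_mul_dist_of_mem {x₀ y c p : X} (hx₀ : x₀ ∈ A)
    (hy : dist y c < infDist c A / 3) (hp : dist c p < 2 * infDist c A) :
    dist p x₀ < 5 * dist y x₀ := by
  have hc : infDist c A ≤ dist c x₀ := infDist_le_dist_of_mem hx₀
  have hcx₀ : dist c x₀ ≤ dist c y + dist y x₀ := dist_triangle _ _ _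
  have hpx₀ : dist p x₀ ≤ dist p c + dist c y + dist y x₀ := dist_triangle4 _ _ _ _
  rw [dist_comm c y] at hcx₀ hpx₀
  rw [dist_comm p c] at hpx₀
  linarith [infDist_nonneg (x := c) (s := A)]

theorem exists_partitionOfUnity_isDugundjiAnchor (hA : IsClosed A) (hne : A.Nonempty) :
    ∃ (f : PartitionOfUnity ↥Aᶜ ↥Aᶜ univ) (a : ↥Aᶜ → A), f.IsDugundjiAnchor a := by
  have hpos (c : ↥Aᶜ) : 0 < infDist (c : X) A := (hA.notMem_iff_infDist_pos hne).1 c.2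
  obtain ⟨f, hf⟩ := PartitionOfUnity.exists_isSubordinate isClosed_univ
    (fun c : ↥Aᶜ => ball c (infDist (c : X) A / 3)) (fun _ => isOpen_ball)
    (fun c _ => mem_iUnion.2 ⟨c, mem_ball_self (by linarith [hpos c])⟩)
  choose a haA hac using fun c : ↥Aᶜ =>
    (infDist_lt_iff hne).1 (show infDist (c : X) A < 2 * infDist (c : X) A by linarith [hpos c])
  refine ⟨f, fun c => ⟨a c, haA c⟩, fun x₀ hx₀ U hU => ?_⟩
  obtain ⟨ε, hε, hεU⟩ := Metric.mem_nhds_iff.1 hU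
  filter_upwards [ball_mem_nhds x₀ (by positivity : 0 < ε / 5)] with x hx hxA i hi
  have hxi : dist x i < infDist (i : X) A / 3 := hf i (subset_tsupport _ hi)
  apply hεU
  rw [mem_ball] at hx ⊢
  linarith [dist_lt_five_mul_dist_of_mem hx₀ hxi (hac i)]

end Metric

theorem dugundji_extension_metric_general
    {X E : Type*} [MetricSpace X] (A : Set X) (hA : IsClosed A)
    [AddCommGroup E] [Module ℝ E] [UniformSpace E] [IsUniformAddGroup E]
    [ContinuousSMul ℝ E] [LocallyConvexSpace ℝ E] :
    ∃ S : C(A, E) → C(X, E),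
      (∀ f g, S (f + g) = S f + S g) ∧
      (∀ (c : ℝ) f, S (c • f) = c • S f) ∧
      (∀ (h : C(A, E)) (x : X) (hx : x ∈ A), S h x = h ⟨x, hx⟩) := by
  rcases A.eq_empty_or_nonempty with rfl | hne
  · exact ⟨0, fun _ _ => (add_zero 0).symm, fun c _ => (smul_zero c).symm,
      fun _ _ hx => absurd hx (notMem_empty _)⟩
  obtain ⟨f, a, ha⟩ := exists_partitionOfUnity_isDugundjiAnchor hA hne
  let S : C(A, E) →ₗ[ℝ] C(X, E) := f.dugundjiExtendₗ a hA ha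
  exact ⟨S, S.map_add, S.map_smul, fun h _ hx => PartitionOfUnity.dugundjiExtend_of_mem h hx⟩

/-- Let `X` be a metric space, `A ⊆ X` closed, and `E` a complete
Hausdorff locally convex real TVS. Then there is a linear extension operator
`S : C(A,E) → C(X,E)`, i.e. a linear operator with `S h x = h x` for all `h ∈ C(A,E)`
and `x ∈ A`. -/
theorem dugundji_extension_metric
    {X E : Type*} [MetricSpace X] (A : Set X) (hA : IsClosed A)
    [AddCommGroup E] [Module ℝ E] [UniformSpace E] [IsUniformAddGroup E]
    [ContinuousSMul ℝ E] [LocallyConvexSpace ℝ E] [T2Space E] [CompleteSpace E] :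
    ∃ S : C(A, E) → C(X, E),
      (∀ f g, S (f + g) = S f + S g) ∧
      (∀ (c : ℝ) f, S (c • f) = c • S f) ∧
      (∀ (h : C(A, E)) (x : X) (hx : x ∈ A), S h x = h ⟨x, hx⟩) :=
  dugundji_extension_metric_general A hA
end
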